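/- arXiv:1906.06265 — 3 statements merged into one kernel-verified Lean document; each statement's English description precedes it below -/
import Mathlib

section
/- Let S be a factorial (unique factorization) semidomain with semifield of fractions F, and let p be a prime element of S. Then the order function ord_p : F \ {0} → ℤ is logarithmic: ord_p(xy) = ord_p(x) + ord_p(y) for all nonzero x, y ∈ F. -/
/-!
Multiplying the representations `x = p ^ a * (u / v)` and `y = p ^ b * (s / t)` gives a
representation of `x * y` with exponent `a + b`, since `p` is prime and so divides neither `u * s`
nor `v * t`. The exponent of such a representation is unique: clearing denominators in
`p ^ m * (a / b) = p ^ (m + k) * (c / d)` gives `a * d = p ^ k * c * b` in `S`, forcing `k = 0`.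
-/

open Polynomial

/-- `ord` is an order function at the prime `p` on the semifield of fractions `F` of `S`:
for every nonzero `a ∈ F`, `a = p ^ (ord a) * (x / y)` where `p` divides neither the
numerator `x` nor the denominator `y`. (`ord_p(0)` is `∞` by convention and is not
constrained here.) -/
def IsOrd {S F : Type*} [CommSemiring S] [Semifield F] [Algebra S F]
    (p : S) (ord : F → ℤ) : Prop :=
  ∀ a : F, a ≠ 0 → ∃ x y : S, ¬ p ∣ x ∧ ¬ p ∣ y ∧ y ≠ 0 ∧
    a = (algebraMap S F p) ^ (ord a) * (algebraMap S F x / algebraMap S F y)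

section

variable {S F : Type*} [CommSemiring S] [Semifield F] [Algebra S F]

theorem algebraMap_injective_of_isCancelMulZero [IsCancelMulZero S]
    [IsLocalization (nonZeroDivisors S) F] : Function.Injective (algebraMap S F) :=
  have : Nontrivial S := (algebraMap S F).domain_nontrivial
  IsLocalization.injectiveₛ F fun _ hm => .of_ne_zero (nonZeroDivisors.ne_zero hm)

theorem zpow_eq_of_zpow_mul_div_eq (hinj : Function.Injective (algebraMap S F)) {p : S}
    (hp : Prime p) {a b c d : S} (ha : ¬ p ∣ a) (hb : ¬ p ∣ b) (hc : ¬ p ∣ c) (hd : ¬ p ∣ d)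
    (hb0 : b ≠ 0) (hd0 : d ≠ 0) {m n : ℤ}
    (h : algebraMap S F p ^ m * (algebraMap S F a / algebraMap S F b) =
      algebraMap S F p ^ n * (algebraMap S F c / algebraMap S F d)) : m = n := by
  wlog hmn : m ≤ n generalizing a b c d m n
  · exact (this hc hd ha hb hd0 hb0 h.symm (by omega)).symm
  have hmap0 {s : S} (hs : s ≠ 0) : algebraMap S F s ≠ 0 :=
    (map_ne_zero_iff _ hinj).mpr hs
  obtain ⟨k, rfl⟩ := Int.exists_add_of_le hmn
  have hS : a * d = p ^ k * c * b := by
    apply hinj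
    rw [zpow_add₀ (hmap0 hp.ne_zero), zpow_natCast, mul_assoc,
      mul_right_inj' (zpow_ne_zero _ (hmap0 hp.ne_zero)), ← mul_div_assoc,
      div_eq_div_iff (hmap0 hb0) (hmap0 hd0)] at h
    simpa only [map_mul, map_pow] using h
  have hk : k = 0 := by
    by_contra hk
    exact hp.not_dvd_mul ha hd (hS ▸ ((dvd_pow_self p hk).mul_right c).mul_right b)
  omega

end

theorem ord_mul_general {S F : Type*} [CommSemiring S] [IsCancelMulZero S]
    [Semifield F] [Algebra S F] [IsLocalization (nonZeroDivisors S) F]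
    (p : S) (hp : Prime p) (ord : F → ℤ) (hord : IsOrd p ord)
    (x y : F) (hx : x ≠ 0) (hy : y ≠ 0) :
    ord (x * y) = ord x + ord y := by
  have hinj : Function.Injective (algebraMap S F) := algebraMap_injective_of_isCancelMulZero
  obtain ⟨u, v, hu, hv, hv0, hxr⟩ := hord x hx
  obtain ⟨s, t, hs, ht, ht0, hyr⟩ := hord y hy
  obtain ⟨w, z, hw, hz, hz0, hxyr⟩ := hord (x * y) (mul_ne_zero hx hy)
  have hP : algebraMap S F p ≠ 0 := (map_ne_zero_iff _ hinj).mpr hp.ne_zero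
  have hprod : x * y = algebraMap S F p ^ (ord x + ord y) *
      (algebraMap S F (u * s) / algebraMap S F (v * t)) := by
    conv_lhs => rw [hxr, hyr]
    rw [zpow_add₀ hP, map_mul, map_mul, mul_div_mul_comm]
    ring
  exact zpow_eq_of_zpow_mul_div_eq hinj hp hw hz (hp.not_dvd_mul hu hs) (hp.not_dvd_mul hv ht)
    hz0 (mul_ne_zero hv0 ht0) (hxyr.symm.trans hprod)

/-- In a factorial semidomain `S` with semifield of fractions `F`, the order function at a
prime `p` is logarithmic: `ord_p (x * y) = ord_p x + ord_p y` for nonzero `x, y ∈ F`. -/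
theorem ord_mul {S F : Type*} [CommSemiring S] [IsCancelMulZero S]
    [Semifield F] [Algebra S F] [IsLocalization (nonZeroDivisors S) F]
    (hFact1 : ∀ s : S, Irreducible s → Prime s)
    (hFact2 : ∀ s : S, s ≠ 0 → ¬ IsUnit s →
      ∃ m : Multiset S, (∀ t ∈ m, Irreducible t) ∧ m.prod = s)
    (p : S) (hp : Prime p) (ord : F → ℤ) (hord : IsOrd p ord)
    (x y : F) (hx : x ≠ 0) (hy : y ≠ 0) :
    ord (x * y) = ord x + ord y :=
  ord_mul_general p hp ord hord x y hx hy
end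

section
/- Let S be a subtractive factorial semidomain. If f, g ∈ S[X] are primitive polynomials (i.e., have content 1, equivalently the gcd of their coefficients is 1), then the product fg is also primitive. -/
/-!
Gauss's lemma modulo a prime `p`: take the least indices `i`, `j` with `p ∤ fᵢ`, `p ∤ gⱼ`. In
`(fg)_{i+j} = fᵢ gⱼ + Σ_{(k,l) ≠ (i,j)} f_k g_l` every other term has `k < i` or `l < j`, so it
is divisible by `p`. Over a semiring one cannot subtract, but subtractivity of the ideal `(p)`
still gives `p ∣ fᵢ gⱼ` from `p ∣ (fg)_{i+j}`, contradicting primality.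
-/

open Finset

namespace Polynomial

variable {S : Type*} [CommSemiring S]

theorem coeff_mul_add_eq_mul_add_sum_erase (f g : S[X]) (i j : ℕ) :
    (f * g).coeff (i + j) = f.coeff i * g.coeff j +
      ∑ x ∈ (antidiagonal (i + j)).erase (i, j), f.coeff x.1 * g.coeff x.2 := by
  rw [coeff_mul]
  exact (add_sum_erase _ (fun x => f.coeff x.1 * g.coeff x.2) (a := (i, j))
    (HasAntidiagonal.mem_antidiagonal.mpr rfl)).symm

theorem sum_erase_coeff_mul_mem {P : Ideal S} {f g : S[X]} {i j : ℕ}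
    (hf : ∀ k < i, f.coeff k ∈ P) (hg : ∀ l < j, g.coeff l ∈ P) :
    ∑ x ∈ (antidiagonal (i + j)).erase (i, j), f.coeff x.1 * g.coeff x.2 ∈ P := by
  refine P.sum_mem fun ⟨k, l⟩ hx => ?_
  obtain ⟨hne, hkl⟩ := mem_erase.mp hx
  rw [HasAntidiagonal.mem_antidiagonal] at hkl
  have hlt : k < i ∨ l < j := by
    by_contra! hge
    exact hne (Prod.ext (by dsimp; omega) (by dsimp; omega))
  rcases hlt with hk | hl
  · exact P.mul_mem_right _ (hf k hk)
  · exact P.mul_mem_left _ (hg l hl)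

theorem exists_coeff_mul_notMem {P : Ideal S} (hP : P.IsPrime)
    (hsub : ∀ a b : S, a + b ∈ P → a ∈ P → b ∈ P) {f g : S[X]}
    (hf : ∃ i, f.coeff i ∉ P) (hg : ∃ j, g.coeff j ∉ P) :
    ∃ k, (f * g).coeff k ∉ P := by
  classical
  refine ⟨Nat.find hf + Nat.find hg, fun hmem => ?_⟩
  have hrest := sum_erase_coeff_mul_mem (f := f) (g := g)
    (fun k hk => not_not.mp (Nat.find_min hf hk)) (fun l hl => not_not.mp (Nat.find_min hg hl))
  rw [coeff_mul_add_eq_mul_add_sum_erase, add_comm] at hmem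
  rcases hP.mem_or_mem (hsub _ _ hmem hrest) with hi | hj
  · exact Nat.find_spec hf hi
  · exact Nat.find_spec hg hj

end Polynomial

theorem primitive_mul_general {S : Type*} [CommSemiring S]
    (hSub : ∀ (I : Ideal S) (a b : S), a + b ∈ I → a ∈ I → b ∈ I)
    (f g : Polynomial S)
    (hf : ∀ p : S, Prime p → ∃ i, ¬ p ∣ f.coeff i)
    (hg : ∀ p : S, Prime p → ∃ i, ¬ p ∣ g.coeff i) :
    ∀ p : S, Prime p → ∃ i, ¬ p ∣ (f * g).coeff i := by
  intro p hp
  have hprime : (Ideal.span {p}).IsPrime := (Ideal.span_singleton_prime hp.ne_zero).mpr hp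
  simpa only [Ideal.mem_span_singleton] using
    Polynomial.exists_coeff_mul_notMem hprime (hSub _)
      (by simpa only [Ideal.mem_span_singleton] using hf p hp)
      (by simpa only [Ideal.mem_span_singleton] using hg p hp)

/-- Over a subtractive factorial semidomain `S`, the product of primitive polynomials is
primitive, where `f ∈ S[X]` is primitive if no prime of `S` divides all its coefficients. -/
theorem primitive_mul {S : Type*} [CommSemiring S] [IsCancelMulZero S]
    (hSub : ∀ (I : Ideal S) (a b : S), a + b ∈ I → a ∈ I → b ∈ I)
    (hFact1 : ∀ s : S, Irreducible s → Prime s)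
    (hFact2 : ∀ s : S, s ≠ 0 → ¬ IsUnit s →
      ∃ m : Multiset S, (∀ t ∈ m, Irreducible t) ∧ m.prod = s)
    (f g : Polynomial S)
    (hf : ∀ p : S, Prime p → ∃ i, ¬ p ∣ f.coeff i)
    (hg : ∀ p : S, Prime p → ∃ i, ¬ p ∣ g.coeff i) :
    ∀ p : S, Prime p → ∃ i, ¬ p ∣ (f * g).coeff i :=
  primitive_mul_general hSub f g hf hg
end

section
/- Let S be a subtractive factorial semidomain and p a prime element of S. Let f = Σ a_i X^i and g = Σ b_j X^j be polynomials in S[X] such that p does not divide all coefficients of f and p does not divide all coefficients of g. Let r be the largest index with p ∤ a_r and s the largest index with p ∤ b_s. Then p does not divide the coefficient of X^{r+s} in fg. -/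
open Polynomial Finset.HasAntidiagonal

/-- Every term `a_i b_j` with `i + j = r + s` other than `a_r b_s` has `r < i` or `s < j`. -/
theorem Polynomial.exists_mem_and_coeff_mul_eq_add {S : Type*} [CommSemiring S] {I : Ideal S}
    {f g : S[X]} {r s : ℕ} (hf : ∀ i, r < i → f.coeff i ∈ I) (hg : ∀ j, s < j → g.coeff j ∈ I) :
    ∃ c ∈ I, (f * g).coeff (r + s) = f.coeff r * g.coeff s + c := by
  have hrs : (r, s) ∈ antidiagonal (r + s) := mem_antidiagonal.mpr rfl
  refine ⟨∑ x ∈ (antidiagonal (r + s)).erase (r, s), f.coeff x.1 * g.coeff x.2,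
    I.sum_mem fun x hx => ?_, by rw [coeff_mul, ← Finset.add_sum_erase _ _ hrs]⟩
  obtain ⟨hne, hx⟩ := Finset.mem_erase.mp hx
  rw [mem_antidiagonal] at hx
  rcases lt_or_ge r x.1 with hi | hi
  · exact I.mul_mem_right _ (hf _ hi)
  · have hj : s < x.2 := by
      by_contra! hj
      exact hne (Prod.ext (by omega) (by omega))
    exact I.mul_mem_left _ (hg _ hj)

theorem not_dvd_coeff_mul_general {S : Type*} [CommSemiring S]
    (hSub : ∀ (I : Ideal S) (a b : S), a + b ∈ I → a ∈ I → b ∈ I)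
    (p : S) (hp : Prime p) (f g : Polynomial S) (r s : ℕ)
    (hr : ¬ p ∣ f.coeff r) (hr' : ∀ i, r < i → p ∣ f.coeff i)
    (hs : ¬ p ∣ g.coeff s) (hs' : ∀ j, s < j → p ∣ g.coeff j) :
    ¬ p ∣ (f * g).coeff (r + s) := by
  intro hdvd
  obtain ⟨c, hc, hcoeff⟩ := exists_mem_and_coeff_mul_eq_add (I := Ideal.span {p})
    (fun i hi => Ideal.mem_span_singleton.mpr (hr' i hi))
    (fun j hj => Ideal.mem_span_singleton.mpr (hs' j hj))
  have hlead : p ∣ f.coeff r * g.coeff s := by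
    rw [← Ideal.mem_span_singleton]
    refine hSub _ c _ ?_ hc
    rwa [add_comm, ← hcoeff, Ideal.mem_span_singleton]
  exact (hp.dvd_mul.mp hlead).elim hr hs

/-- Over a subtractive factorial semidomain `S` with prime `p`: if `r` is the largest
index with `p ∤ a_r` (for `f = Σ a_i X^i`) and `s` is the largest index with `p ∤ b_s`
(for `g = Σ b_j X^j`), then `p` does not divide the coefficient of `X^(r+s)` in `f * g`. -/
theorem not_dvd_coeff_mul {S : Type*} [CommSemiring S] [IsCancelMulZero S]
    (hSub : ∀ (I : Ideal S) (a b : S), a + b ∈ I → a ∈ I → b ∈ I)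
    (hFact1 : ∀ s : S, Irreducible s → Prime s)
    (hFact2 : ∀ s : S, s ≠ 0 → ¬ IsUnit s →
      ∃ m : Multiset S, (∀ t ∈ m, Irreducible t) ∧ m.prod = s)
    (p : S) (hp : Prime p) (f g : Polynomial S) (r s : ℕ)
    (hr : ¬ p ∣ f.coeff r) (hr' : ∀ i, r < i → p ∣ f.coeff i)
    (hs : ¬ p ∣ g.coeff s) (hs' : ∀ j, s < j → p ∣ g.coeff j) :
    ¬ p ∣ (f * g).coeff (r + s) :=
  not_dvd_coeff_mul_general hSub p hp f g r s hr hr' hs hs'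
end
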